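/- Let X be a compact Hausdorff space, μ a regular Borel measure on X, and φ_μ the functional on C(X) given by integration against μ. Then the absolute value |φ_μ| (from the polar decomposition of φ_μ in C(X)**) is the functional given by integration against the total variation measure |μ|. -/

import Mathlib

/-!
Write `ω = |φ|` and `v` for the partial isometry, so that `φ = ω(· v)`. For `0 ≤ f ≤ 1` in `C(X)`,
Cauchy–Schwarz for `ω` gives `|φ(f h)|² ≤ ω(f) ω(v* f v)` whenever `‖h‖ ≤ 1`, and letting `h`
approach `ḡ` in `L¹(ν)` yields `(∫ f dν)² ≤ ω(f) ω(v* f v)`. The same bound for `1 - f`, together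
with `ω(v* v) = ω(1) ≤ ‖φ‖ ≤ ν(X)`, squeezes `ω(f)` to `∫ f dν`. Nonnegative contractions span
`C(X)`, so `ω = ∫ · dν`.
-/

open ComplexOrder Filter Topology

section AbsValue

variable (M : Type*) [NormedRing M] [StarRing M] [NormedAlgebra ℂ M]

/-- `absΦ` is the absolute value (from the polar decomposition) of the weak-*
continuous functional `Φ` on the von Neumann algebra `M`, with partial isometry `v`:
`Φ = absΦ(· v)`, `absΦ` is positive, and `M(1 - v*v) = {ξ | absΦ(ξ*ξ) = 0}`. -/
def IsAbsValue (Φ absΦ : M →L[ℂ] ℂ) (v : M) : Prop :=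
  v * star v * v = v ∧
  (∀ ξ : M, 0 ≤ absΦ (star ξ * ξ)) ∧
  (∀ ξ : M, Φ ξ = absΦ (ξ * v)) ∧
  (∀ ξ : M, absΦ (star ξ * ξ) = 0 ↔ ξ * (star v * v) = 0)

end AbsValue

section Setup

variable (T M : Type*) [NormedRing T] [StarRing T] [NormedAlgebra ℂ T]
  [NormedRing M] [StarRing M] [NormedAlgebra ℂ M]

/-- Abstract model of the canonical inclusion `ι` of a unital C*-algebra `T` into its
bidual von Neumann algebra `M = T**`, together with the weak-* continuous extension
`hat φ` of each bounded functional `φ` on `T`, and the polar decomposition data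
(`absVal φ = |φ|`, with partial isometry `pIso φ`). -/
structure BidualSetup where
  ι : T →L[ℂ] M
  ι_mul : ∀ s t : T, ι (s * t) = ι s * ι t
  ι_star : ∀ t : T, ι (star t) = star (ι t)
  ι_one : ι 1 = 1
  ι_isom : ∀ t : T, ‖ι t‖ = ‖t‖
  hat : (T →L[ℂ] ℂ) →ₗ[ℂ] (M →L[ℂ] ℂ)
  hat_ext : ∀ (φ : T →L[ℂ] ℂ) (t : T), hat φ (ι t) = φ t
  hat_norm : ∀ φ : T →L[ℂ] ℂ, ‖hat φ‖ = ‖φ‖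
  absVal : (T →L[ℂ] ℂ) → (M →L[ℂ] ℂ)
  pIso : (T →L[ℂ] ℂ) → M
  polar : ∀ φ : T →L[ℂ] ℂ, IsAbsValue M (hat φ) (absVal φ) (pIso φ)

end Setup

section AC

variable {T M : Type*} [NormedRing T] [StarRing T] [NormedAlgebra ℂ T]
  [NormedRing M] [StarRing M] [NormedAlgebra ℂ M]

/-- `φ` is absolutely continuous with respect to `ψ`:
`|ψ|(ξ*ξ) = 0` implies `|φ|(ξ*ξ) = 0` for all `ξ ∈ T**`. -/
def AbsCont (B : BidualSetup T M) (φ ψ : T →L[ℂ] ℂ) : Prop :=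
  ∀ ξ : M, B.absVal ψ (star ξ * ξ) = 0 → B.absVal φ (star ξ * ξ) = 0

/-- The support projection `s_φ = v_φ* v_φ` of a functional `φ` on `T`. -/
def suppProj (B : BidualSetup T M) (φ : T →L[ℂ] ℂ) : M :=
  star (B.pIso φ) * B.pIso φ

/-- A state on a unital C*-algebra: a positive unital functional. -/
def IsStateOn (δ : T →L[ℂ] ℂ) : Prop :=
  (∀ t : T, 0 ≤ δ (star t * t)) ∧ δ 1 = 1

end AC


open MeasureTheory

section PositiveFunctional

variable {A : Type*} [Ring A] [StarRing A] [Algebra ℂ A] [StarModule ℂ A] {ω : A →ₗ[ℂ] ℂ}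

theorem conj_apply_star_mul_of_nonneg (hω : ∀ a, 0 ≤ ω (star a * a)) (a b : A) :
    starRingEnd ℂ (ω (star a * b)) = ω (star b * a) := by
  have him : ∀ x, (ω (star x * x)).im = 0 := fun x => (Complex.nonneg_iff.1 (hω x)).2.symm
  have hsum := him (a + b)
  have hisum := him (a + Complex.I • b)
  simp only [star_add, star_smul, add_mul, mul_add, smul_mul_assoc, mul_smul_comm, map_add,
    map_smul, smul_eq_mul, Complex.add_im, Complex.mul_im, Complex.mul_re, him, Complex.star_def,
    Complex.conj_I, Complex.I_re, Complex.I_im, Complex.neg_re, Complex.neg_im] at hsum hisum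
  apply Complex.ext <;> simp only [Complex.conj_re, Complex.conj_im] <;> linarith

abbrev preInnerProductCoreOfNonneg (ω : A →ₗ[ℂ] ℂ) (hω : ∀ a, 0 ≤ ω (star a * a)) :
    PreInnerProductSpace.Core ℂ A where
  inner a b := ω (star a * b)
  conj_inner_symm a b := conj_apply_star_mul_of_nonneg hω b a
  re_inner_nonneg a := (Complex.nonneg_iff.1 (hω a)).1
  add_left a b c := by simp only [star_add, add_mul, map_add]
  smul_left a b r := by simp only [star_smul, smul_mul_assoc, map_smul, smul_eq_mul]; rfl

theorem norm_apply_star_mul_sq_le (hω : ∀ a, 0 ≤ ω (star a * a)) (a b : A) :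
    ‖ω (star a * b)‖ ^ 2 ≤ (ω (star a * a)).re * (ω (star b * b)).re := by
  let _ := preInnerProductCoreOfNonneg ω hω
  have hcs := InnerProductSpace.Core.inner_mul_inner_self_le (𝕜 := ℂ) a b
  have hswap : ‖ω (star b * a)‖ = ‖ω (star a * b)‖ := by
    rw [← conj_apply_star_mul_of_nonneg hω, Complex.norm_conj]
  rw [sq]
  exact hswap ▸ hcs

theorem apply_mul_eq_zero_of_apply_star_mul_self_eq_zero (hω : ∀ a, 0 ≤ ω (star a * a))
    {b : A} (hb : ω (star b * b) = 0) (a : A) : ω (a * b) = 0 := by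
  have hcs := norm_apply_star_mul_sq_le hω (star a) b
  rw [hb, Complex.zero_re, mul_zero, star_star] at hcs
  exact norm_eq_zero.1 (pow_eq_zero_iff two_ne_zero |>.1 (le_antisymm hcs (by positivity)))

end PositiveFunctional

section AbsValue

variable {M : Type*} [NormedRing M] [StarRing M] [NormedAlgebra ℂ M] {Φ ω : M →L[ℂ] ℂ} {v : M}

theorem IsAbsValue.isStarProjection_star_mul_self (h : IsAbsValue M Φ ω v) :
    IsStarProjection (star v * v) where
  isIdempotentElem := by rw [IsIdempotentElem, mul_assoc, ← mul_assoc v, h.1]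
  isSelfAdjoint := .star_mul_self v

theorem IsAbsValue.apply_mul_star_mul_self [StarModule ℂ M] (h : IsAbsValue M Φ ω v) (ξ : M) :
    ω (ξ * (star v * v)) = ω ξ := by
  have hcompl : ω (star (1 - star v * v) * (1 - star v * v)) = 0 :=
    (h.2.2.2 _).2 (by rw [sub_mul, one_mul, h.isStarProjection_star_mul_self.isIdempotentElem.eq,
      sub_self])
  have hzero := apply_mul_eq_zero_of_apply_star_mul_self_eq_zero (ω := ω.toLinearMap) h.2.1
    hcompl ξ
  rw [ContinuousLinearMap.coe_coe, mul_sub, mul_one, map_sub, sub_eq_zero] at hzero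
  exact hzero.symm

theorem IsAbsValue.norm_apply_le [StarModule ℂ M] [CStarRing M] (h : IsAbsValue M Φ ω v)
    (ξ : M) : ‖ω ξ‖ ≤ ‖Φ‖ * ‖ξ‖ := by
  have hv : ‖v‖ ≤ 1 := by
    have := h.isStarProjection_star_mul_self.norm_le
    rw [CStarRing.norm_star_mul_self] at this
    nlinarith [norm_nonneg v]
  rw [← h.apply_mul_star_mul_self, ← mul_assoc, ← h.2.2.1]
  calc ‖Φ (ξ * star v)‖ ≤ ‖Φ‖ * (‖ξ‖ * ‖star v‖) :=
        (Φ.le_opNorm _).trans (by gcongr; exact norm_mul_le _ _)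
    _ ≤ ‖Φ‖ * ‖ξ‖ := by
        rw [norm_star]
        gcongr
        exact mul_le_of_le_one_right (norm_nonneg ξ) hv

end AbsValue

namespace BidualSetup

section CauchySchwarz

variable {T M : Type*} [NormedRing T] [StarRing T] [NormedAlgebra ℂ T]
  [NormedRing M] [StarRing M] [NormedAlgebra ℂ M] [StarModule ℂ M]
  (B : BidualSetup T M) (φ : T →L[ℂ] ℂ)

theorem norm_apply_star_mul_self_mul_sq_le (k h : T) :
    ‖φ (star k * k * h)‖ ^ 2 ≤ (B.absVal φ (B.ι (star k * k))).re *
      (B.absVal φ (star (B.pIso φ) * B.ι (star h * (star k * k) * h) * B.pIso φ)).re := by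
  obtain ⟨-, hpos, hrep, -⟩ := B.polar φ
  set v := B.pIso φ
  have hcs := norm_apply_star_mul_sq_le (ω := (B.absVal φ).toLinearMap) hpos (B.ι k)
    (B.ι k * B.ι h * v)
  have hφ : φ (star k * k * h) = B.absVal φ (star (B.ι k) * (B.ι k * B.ι h * v)) := by
    rw [← B.hat_ext, hrep, B.ι_mul, B.ι_mul, B.ι_star, mul_assoc, mul_assoc, mul_assoc]
  have hright : star (B.ι k * B.ι h * v) * (B.ι k * B.ι h * v) =
      star v * B.ι (star h * (star k * k) * h) * v := by
    simp only [B.ι_mul, B.ι_star, star_mul, mul_assoc]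
  rwa [hφ, B.ι_mul, B.ι_star, ← hright]

end CauchySchwarz

section Positivity

variable {T M : Type*} [CStarAlgebra T] [PartialOrder T] [StarOrderedRing T]
  [NormedRing M] [StarRing M] [NormedAlgebra ℂ M] (B : BidualSetup T M) (φ : T →L[ℂ] ℂ)

theorem absVal_ι_nonneg {t : T} (ht : 0 ≤ t) : 0 ≤ B.absVal φ (B.ι t) := by
  obtain ⟨k, rfl⟩ := CStarAlgebra.nonneg_iff_eq_star_mul_self.1 ht
  rw [B.ι_mul, B.ι_star]
  exact (B.polar φ).2.1 _

theorem absVal_star_pIso_mul_ι_mul_pIso_nonneg {t : T} (ht : 0 ≤ t) :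
    0 ≤ B.absVal φ (star (B.pIso φ) * B.ι t * B.pIso φ) := by
  obtain ⟨k, rfl⟩ := CStarAlgebra.nonneg_iff_eq_star_mul_self.1 ht
  have hconj : star (B.pIso φ) * B.ι (star k * k) * B.pIso φ =
      star (B.ι k * B.pIso φ) * (B.ι k * B.pIso φ) := by
    simp only [B.ι_mul, B.ι_star, star_mul, mul_assoc]
  rw [hconj]
  exact (B.polar φ).2.1 _

end Positivity

end BidualSetup

theorem norm_inv_max_one_smul_sub_le {E : Type*} [NormedAddCommGroup E] [NormedSpace ℝ E]
    (z : E) {w : E} (hw : ‖w‖ ≤ 1) : ‖(max 1 ‖z‖)⁻¹ • z - w‖ ≤ 2 * ‖z - w‖ := by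
  rcases le_total ‖z‖ 1 with hz | hz
  · rw [max_eq_left hz, inv_one, one_smul]
    linarith [norm_nonneg (z - w)]
  · rw [max_eq_right hz]
    have hz0 : 0 < ‖z‖ := one_pos.trans_le hz
    have hretract : ‖‖z‖⁻¹ • z - z‖ = ‖z‖ - 1 := by
      rw [show ‖z‖⁻¹ • z - z = (‖z‖⁻¹ - 1) • z by rw [sub_smul, one_smul], norm_smul,
        Real.norm_eq_abs, abs_of_nonpos, neg_sub, sub_mul, one_mul, inv_mul_cancel₀ hz0.ne']
      linarith [inv_le_one_of_one_le₀ hz]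
    calc ‖‖z‖⁻¹ • z - w‖ ≤ ‖‖z‖⁻¹ • z - z‖ + ‖z - w‖ :=
          norm_sub_le_norm_sub_add_norm_sub _ _ _
      _ ≤ 2 * ‖z - w‖ := by linarith [norm_sub_norm_le z w]

theorem ContinuousMap.star_mul_mul_le_of_norm_le_one {X : Type*} [TopologicalSpace X]
    [CompactSpace X] {f h : C(X, ℂ)} (hf : 0 ≤ f) (hh : ‖h‖ ≤ 1) : star h * f * h ≤ f := by
  refine ContinuousMap.le_def.2 fun x => ?_
  have hhx : ‖h x‖ ^ 2 ≤ 1 := pow_le_one₀ (norm_nonneg _) ((h.norm_coe_le_norm x).trans hh)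
  calc (star h * f * h) x = ((‖h x‖ ^ 2 : ℝ) : ℂ) * f x := by
        rw [ContinuousMap.mul_apply, ContinuousMap.mul_apply, ContinuousMap.star_apply,
          mul_right_comm, Complex.star_def, Complex.conj_mul', Complex.ofReal_pow]
    _ ≤ 1 * f x := mul_le_mul_of_nonneg_right (by exact_mod_cast hhx) (hf x)
    _ = f x := one_mul _

-- AM–GM in both hypotheses squeezes `a` to `(p + t) / 2`; equality in AM–GM then forces `p = t`.
theorem eq_of_sq_le_mul_of_sub_sq_le_sub_mul_sub {a p t e c : ℝ} (hp : 0 ≤ p) (ht : 0 ≤ t)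
    (hpe : p ≤ e) (hte : t ≤ e) (hec : e ≤ c) (h₁ : a ^ 2 ≤ p * t)
    (h₂ : (c - a) ^ 2 ≤ (e - p) * (e - t)) : p = a := by
  have hlow : (p + t) / 2 ≤ a := by nlinarith [sq_nonneg (p - t)]
  have hhigh : a ≤ (p + t) / 2 := by nlinarith [sq_nonneg (p - t)]
  nlinarith [sq_nonneg (p - t)]

theorem integrable_conj_of_ae_norm_eq_one {X : Type*} [MeasurableSpace X] {ν : Measure X}
    [IsFiniteMeasure ν] {g : X → ℂ} (hg : AEStronglyMeasurable g ν)
    (hg1 : ∀ᵐ x ∂ν, ‖g x‖ = 1) : Integrable (fun x => starRingEnd ℂ (g x)) ν :=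
  .of_bound (Complex.continuous_conj.comp_aestronglyMeasurable hg) 1
    (by filter_upwards [hg1] with x hx using by simp [hx])

section ContinuousFunctions

variable {X : Type*} [TopologicalSpace X] [CompactSpace X] [MeasurableSpace X] {ν : Measure X}
  [IsFiniteMeasure ν] {g : X → ℂ}

theorem ContinuousMap.integrable_of_compactSpace [OpensMeasurableSpace X] {E : Type*}
    [NormedAddCommGroup E] (f : C(X, E)) : Integrable f ν :=
  f.continuous.integrable_of_hasCompactSupport (.of_compactSpace f)

theorem exists_norm_le_one_integral_norm_sub_conj_le [BorelSpace X] [T2Space X] [ν.Regular]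
    (hg : AEStronglyMeasurable g ν) (hg1 : ∀ᵐ x ∂ν, ‖g x‖ = 1) {ε : ℝ} (hε : 0 < ε) :
    ∃ h : C(X, ℂ), ‖h‖ ≤ 1 ∧ ∫ x, ‖h x - starRingEnd ℂ (g x)‖ ∂ν ≤ ε := by
  have hconj := integrable_conj_of_ae_norm_eq_one hg hg1
  obtain ⟨h₀, hh₀, -⟩ := hconj.exists_boundedContinuous_integral_sub_le (half_pos hε)
  let h : C(X, ℂ) := ⟨fun x => (max 1 ‖h₀ x‖)⁻¹ • h₀ x, by
    refine .smul (.inv₀ (continuous_const.max h₀.continuous.norm) fun x => ?_) h₀.continuous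
    exact (one_pos.trans_le (le_max_left _ _)).ne'⟩
  refine ⟨h, (ContinuousMap.norm_le _ zero_le_one).2 fun x => ?_, ?_⟩
  · rw [ContinuousMap.coe_mk, norm_smul, norm_inv, Real.norm_of_nonneg (by positivity),
      inv_mul_le_one₀ (by positivity)]
    exact le_max_right _ _
  · calc ∫ x, ‖h x - starRingEnd ℂ (g x)‖ ∂ν
        ≤ ∫ x, 2 * ‖starRingEnd ℂ (g x) - h₀ x‖ ∂ν := by
          refine integral_mono_ae (h.integrable_of_compactSpace.sub hconj).norm
            (((hconj.sub (h₀.toContinuousMap.integrable_of_compactSpace)).norm).const_mul 2) ?_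
          filter_upwards [hg1] with x hx
          rw [norm_sub_rev (starRingEnd ℂ (g x))]
          exact norm_inv_max_one_smul_sub_le _ (by simp [hx])
      _ ≤ ε := by
          rw [integral_const_mul]
          linarith

theorem norm_le_measureReal_univ_of_forall_eq_integral_mul (hg1 : ∀ᵐ x ∂ν, ‖g x‖ = 1)
    {φ : C(X, ℂ) →L[ℂ] ℂ} (hφ : ∀ f : C(X, ℂ), φ f = ∫ x, f x * g x ∂ν) :
    ‖φ‖ ≤ ν.real Set.univ := by
  refine φ.opNorm_le_bound measureReal_nonneg fun f => ?_
  rw [hφ, ← smul_eq_mul, ← integral_const]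
  refine norm_integral_le_of_norm_le (integrable_const _) ?_
  filter_upwards [hg1] with x hx
  rw [norm_mul, hx, mul_one]
  exact f.norm_coe_le_norm x

theorem norm_integral_sub_apply_mul_le [OpensMeasurableSpace X] (hg : AEStronglyMeasurable g ν)
    (hg1 : ∀ᵐ x ∂ν, ‖g x‖ = 1) {φ : C(X, ℂ) →L[ℂ] ℂ}
    (hφ : ∀ f : C(X, ℂ), φ f = ∫ x, f x * g x ∂ν) {f : C(X, ℂ)} (hf : ‖f‖ ≤ 1) (h : C(X, ℂ)) :
    ‖∫ x, f x ∂ν - φ (f * h)‖ ≤ ∫ x, ‖h x - starRingEnd ℂ (g x)‖ ∂ν := by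
  have hfhg : Integrable (fun x => (f * h) x * g x) ν :=
    (f * h).integrable_of_compactSpace.mul_bdd hg (c := 1)
      (by filter_upwards [hg1] with x hx using hx.le)
  rw [hφ, ← integral_sub f.integrable_of_compactSpace hfhg]
  refine norm_integral_le_of_norm_le
    (h.integrable_of_compactSpace.sub (integrable_conj_of_ae_norm_eq_one hg hg1)).norm ?_
  filter_upwards [hg1] with x hx
  have hgg : starRingEnd ℂ (g x) * g x = 1 := by
    rw [Complex.conj_mul', hx]
    norm_num
  calc ‖f x - (f * h) x * g x‖ = ‖f x‖ * ‖h x - starRingEnd ℂ (g x)‖ * ‖g x‖ := by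
        rw [← norm_mul, ← norm_mul, ContinuousMap.mul_apply, ← norm_neg]
        congr 1
        linear_combination (f x) * hgg
    _ ≤ 1 * ‖h x - starRingEnd ℂ (g x)‖ * 1 := by
        rw [hx]
        gcongr
        exact (f.norm_coe_le_norm x).trans hf
    _ = ‖h x - starRingEnd ℂ (g x)‖ := by ring

theorem norm_integral_le_of_forall_norm_apply_mul_le [BorelSpace X] [T2Space X] [ν.Regular]
    (hg : AEStronglyMeasurable g ν) (hg1 : ∀ᵐ x ∂ν, ‖g x‖ = 1) {φ : C(X, ℂ) →L[ℂ] ℂ}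
    (hφ : ∀ f : C(X, ℂ), φ f = ∫ x, f x * g x ∂ν) {f : C(X, ℂ)} (hf : ‖f‖ ≤ 1) {r : ℝ}
    (hr : ∀ h : C(X, ℂ), ‖h‖ ≤ 1 → ‖φ (f * h)‖ ≤ r) :
    ‖∫ x, f x ∂ν‖ ≤ r := by
  refine le_of_forall_pos_le_add fun ε hε => ?_
  obtain ⟨h, hh, hclose⟩ := exists_norm_le_one_integral_norm_sub_conj_le hg hg1 hε
  calc ‖∫ x, f x ∂ν‖ ≤ ‖φ (f * h)‖ + ‖∫ x, f x ∂ν - φ (f * h)‖ := norm_le_insert' _ _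
    _ ≤ r + ε :=
        add_le_add (hr h hh) ((norm_integral_sub_apply_mul_le hg hg1 hφ hf h).trans hclose)

theorem ContinuousMap.eq_integral_of_forall_nonneg_norm_le_one [OpensMeasurableSpace X]
    (L : C(X, ℂ) →ₗ[ℂ] ℂ) (hL : ∀ f : C(X, ℂ), 0 ≤ f → ‖f‖ ≤ 1 → L f = ∫ x, f x ∂ν)
    (f : C(X, ℂ)) : L f = ∫ x, f x ∂ν := by
  have hf : f ∈ Submodule.span ℂ ({f : C(X, ℂ) | 0 ≤ f} ∩ Metric.closedBall 0 1) :=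
    CStarAlgebra.span_nonneg_inter_unitClosedBall (A := C(X, ℂ)) ▸ Submodule.mem_top
  induction hf using Submodule.span_induction with
  | mem f hf => exact hL f hf.1 (mem_closedBall_zero_iff.1 hf.2)
  | zero => simp
  | add f₁ f₂ _ _ h₁ h₂ =>
    rw [map_add, h₁, h₂,
      ← integral_add f₁.integrable_of_compactSpace f₂.integrable_of_compactSpace]
    rfl
  | smul c f _ h => rw [map_smul, h, ← integral_smul]; rfl

theorem BidualSetup.re_absVal_one_le_measureReal_univ {M : Type*} [NormedRing M] [StarRing M]
    [NormedAlgebra ℂ M] [StarModule ℂ M] [CStarRing M] (B : BidualSetup C(X, ℂ) M)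
    (hg1 : ∀ᵐ x ∂ν, ‖g x‖ = 1) {φ : C(X, ℂ) →L[ℂ] ℂ}
    (hφ : ∀ f : C(X, ℂ), φ f = ∫ x, f x * g x ∂ν) :
    (B.absVal φ (B.ι 1)).re ≤ ν.real Set.univ := by
  have hone : ‖B.ι 1‖ ≤ 1 := B.ι_isom 1 ▸ (ContinuousMap.norm_le _ zero_le_one).2 (by simp)
  calc (B.absVal φ (B.ι 1)).re ≤ ‖B.hat φ‖ * ‖B.ι 1‖ :=
        (Complex.re_le_norm _).trans ((B.polar φ).norm_apply_le _)
    _ = ‖φ‖ * ‖B.ι 1‖ := by rw [B.hat_norm]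
    _ ≤ ν.real Set.univ := (mul_le_of_le_one_right (norm_nonneg φ) hone).trans
        (norm_le_measureReal_univ_of_forall_eq_integral_mul hg1 hφ)

end ContinuousFunctions

section AbsValueOfIntegration

variable {X M : Type*} [TopologicalSpace X] [CompactSpace X] [T2Space X] [MeasurableSpace X]
  [BorelSpace X] [NormedRing M] [StarRing M] [NormedAlgebra ℂ M] [StarModule ℂ M]
  {ν : Measure X} [IsFiniteMeasure ν] [ν.Regular] {g : X → ℂ} {φ : C(X, ℂ) →L[ℂ] ℂ}

theorem BidualSetup.norm_integral_sq_le (B : BidualSetup C(X, ℂ) M)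
    (hg : AEStronglyMeasurable g ν) (hg1 : ∀ᵐ x ∂ν, ‖g x‖ = 1)
    (hφ : ∀ f : C(X, ℂ), φ f = ∫ x, f x * g x ∂ν) {f : C(X, ℂ)} (hf0 : 0 ≤ f) (hf1 : ‖f‖ ≤ 1) :
    ‖∫ x, f x ∂ν‖ ^ 2 ≤ (B.absVal φ (B.ι f)).re *
      (B.absVal φ (star (B.pIso φ) * B.ι f * B.pIso φ)).re := by
  set p := (B.absVal φ (B.ι f)).re
  set t := (B.absVal φ (star (B.pIso φ) * B.ι f * B.pIso φ)).re
  have hp : 0 ≤ p := (Complex.nonneg_iff.1 (B.absVal_ι_nonneg φ hf0)).1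
  have hpt : 0 ≤ p * t :=
    mul_nonneg hp (Complex.nonneg_iff.1 (B.absVal_star_pIso_mul_ι_mul_pIso_nonneg φ hf0)).1
  have hbound : ∀ h : C(X, ℂ), ‖h‖ ≤ 1 → ‖φ (f * h)‖ ≤ √(p * t) := by
    intro h hh
    have hle := B.absVal_star_pIso_mul_ι_mul_pIso_nonneg φ
      (sub_nonneg.2 (ContinuousMap.star_mul_mul_le_of_norm_le_one hf0 hh))
    rw [map_sub, mul_sub, sub_mul, map_sub, Complex.nonneg_iff, Complex.sub_re, sub_nonneg] at hle
    obtain ⟨k, rfl⟩ := CStarAlgebra.nonneg_iff_eq_star_mul_self.1 hf0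
    refine (Real.le_sqrt (norm_nonneg _) hpt).2 ?_
    exact (B.norm_apply_star_mul_self_mul_sq_le φ k h).trans (mul_le_mul_of_nonneg_left hle.1 hp)
  exact (Real.le_sqrt (norm_nonneg _) hpt).1
    (norm_integral_le_of_forall_norm_apply_mul_le hg hg1 hφ hf1 hbound)

theorem BidualSetup.absVal_ι_eq_integral_of_nonneg_of_norm_le_one [CStarRing M]
    (B : BidualSetup C(X, ℂ) M) (hg : AEStronglyMeasurable g ν) (hg1 : ∀ᵐ x ∂ν, ‖g x‖ = 1)
    (hφ : ∀ f : C(X, ℂ), φ f = ∫ x, f x * g x ∂ν) {f : C(X, ℂ)} (hf0 : 0 ≤ f) (hf1 : ‖f‖ ≤ 1) :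
    B.absVal φ (B.ι f) = ∫ x, f x ∂ν := by
  have hcompl0 : 0 ≤ 1 - f := sub_nonneg.2 ((CStarAlgebra.norm_le_one_iff_of_nonneg f hf0).1 hf1)
  have hcompl1 : ‖1 - f‖ ≤ 1 :=
    (CStarAlgebra.norm_le_one_iff_of_nonneg _ hcompl0).2 (sub_le_self _ hf0)
  have hre_sq (z : ℂ) : z.re ^ 2 ≤ ‖z‖ ^ 2 := by
    rw [sq, Complex.sq_norm]
    exact Complex.re_sq_le_normSq z
  have h₁ := (hre_sq _).trans (B.norm_integral_sq_le hg hg1 hφ hf0 hf1)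
  have h₂ := (hre_sq _).trans (B.norm_integral_sq_le hg hg1 hφ hcompl0 hcompl1)
  have hp := Complex.nonneg_iff.1 (B.absVal_ι_nonneg φ hf0)
  have ht := Complex.nonneg_iff.1 (B.absVal_star_pIso_mul_ι_mul_pIso_nonneg φ hf0)
  have hpe := Complex.nonneg_iff.1 (B.absVal_ι_nonneg φ hcompl0)
  have hte := Complex.nonneg_iff.1 (B.absVal_star_pIso_mul_ι_mul_pIso_nonneg φ hcompl0)
  have hint : ∫ x, (1 - f) x ∂ν = ν.real Set.univ - ∫ x, f x ∂ν := by
    simp only [ContinuousMap.sub_apply, ContinuousMap.one_apply]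
    rw [integral_sub (integrable_const 1) f.integrable_of_compactSpace, integral_const,
      Complex.real_smul, mul_one]
  have hΨ : B.absVal φ (B.ι (1 - f)) = B.absVal φ (B.ι 1) - B.absVal φ (B.ι f) := by
    rw [map_sub, map_sub]
  have hΘ : B.absVal φ (star (B.pIso φ) * B.ι (1 - f) * B.pIso φ) =
      B.absVal φ (B.ι 1) - B.absVal φ (star (B.pIso φ) * B.ι f * B.pIso φ) := by
    rw [map_sub, mul_sub, sub_mul, map_sub, B.ι_one, mul_one, ← one_mul (star _ * _),
      (B.polar φ).apply_mul_star_mul_self]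
  rw [hint, hΨ, hΘ] at h₂
  rw [hΨ] at hpe
  rw [hΘ] at hte
  simp only [Complex.sub_re, Complex.ofReal_re, sub_nonneg] at h₂ hpe hte
  have hre := eq_of_sq_le_mul_of_sub_sq_le_sub_mul_sub hp.1 ht.1 hpe.1 hte.1
    (B.re_absVal_one_le_measureReal_univ hg1 hφ) h₁ h₂
  exact Complex.ext hre (hp.2.symm.trans (Complex.nonneg_iff.1 (integral_nonneg fun x => hf0 x)).2)

end AbsValueOfIntegration

theorem stmt1_general {X M : Type*} [TopologicalSpace X] [CompactSpace X] [T2Space X]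
    [MeasurableSpace X] [BorelSpace X]
    [NormedRing M] [StarRing M] [CStarRing M]
    [NormedAlgebra ℂ M] [StarModule ℂ M]
    (B : BidualSetup C(X, ℂ) M)
    (ν : Measure X) [IsFiniteMeasure ν] [ν.Regular]
    (g : X → ℂ) (hg : AEStronglyMeasurable g ν)
    (hg1 : ∀ᵐ x ∂ν, ‖g x‖ = 1)
    (φ : C(X, ℂ) →L[ℂ] ℂ)
    (hφ : ∀ f : C(X, ℂ), φ f = ∫ x, f x * g x ∂ν) :
    ∀ f : C(X, ℂ), B.absVal φ (B.ι f) = ∫ x, f x ∂ν :=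
  ContinuousMap.eq_integral_of_forall_nonneg_norm_le_one ((B.absVal φ).comp B.ι).toLinearMap
    fun _ hf0 hf1 => B.absVal_ι_eq_integral_of_nonneg_of_norm_le_one hg hg1 hφ hf0 hf1

/-- for a regular Borel (complex) measure `μ` on a compact Hausdorff
space `X`, written via its polar decomposition `dμ = ḡ d|μ|` with `ν = |μ|` a finite
regular Borel positive measure and `|g| = 1` a.e., the absolute value of the
integration functional `φ_μ : f ↦ ∫ f g dν` on `C(X)` is integration against `ν`. -/
theorem stmt1 {X M : Type*} [TopologicalSpace X] [CompactSpace X] [T2Space X]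
    [MeasurableSpace X] [BorelSpace X]
    [NormedRing M] [StarRing M] [CStarRing M]
    [NormedAlgebra ℂ M] [StarModule ℂ M] [CompleteSpace M]
    (B : BidualSetup C(X, ℂ) M)
    (ν : Measure X) [IsFiniteMeasure ν] [ν.Regular]
    (g : X → ℂ) (hg : AEStronglyMeasurable g ν)
    (hg1 : ∀ᵐ x ∂ν, ‖g x‖ = 1)
    (φ : C(X, ℂ) →L[ℂ] ℂ)
    (hφ : ∀ f : C(X, ℂ), φ f = ∫ x, f x * g x ∂ν) :
    ∀ f : C(X, ℂ), B.absVal φ (B.ι f) = ∫ x, f x ∂ν :=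
  stmt1_general B ν g hg hg1 φ hφ
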